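/- arXiv:1111.7002 — 5 statements merged into one kernel-verified Lean document; each statement's English description precedes it below -/
import Mathlib

section
/- Let A be a Codazzi tensor on a Riemannian manifold (M,g) with eigenvalue function λ whose eigendistribution V_λ = {Y : AY = λY} has dimension at least 2 at every point. Then D_Y λ = 0 for every vector field Y ∈ V_λ; that is, λ is constant in all directions belonging to V_λ. -/
/-- Abstract axiomatization of the space of smooth vector fields `VF` on a
Riemannian manifold with point set `M`: a module over the ring of functions
`M → ℝ`, together with the metric `g`, the Levi-Civita connection `nabla`,
the directional derivative `D`, the gradient `grad` and the Lie bracket,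
satisfying the usual laws. -/
structure RiemannianSetup (M : Type*) (VF : Type*) [AddCommGroup VF]
    [Module (M → ℝ) VF] where
  g : VF → VF → M → ℝ
  nabla : VF → VF → VF
  D : VF → (M → ℝ) → M → ℝ
  grad : (M → ℝ) → VF
  bracket : VF → VF → VF
  g_symm : ∀ X Y, g X Y = g Y X
  g_addLeft : ∀ X Y Z, g (X + Y) Z = g X Z + g Y Z
  g_smulLeft : ∀ (f : M → ℝ) (X Y : VF), g (f • X) Y = f * g X Y
  g_nondeg : ∀ X Y : VF, (∀ Z, g X Z = g Y Z) → X = Y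
  nabla_addRight : ∀ X Y Z, nabla X (Y + Z) = nabla X Y + nabla X Z
  nabla_addLeft : ∀ X Y Z, nabla (X + Y) Z = nabla X Z + nabla Y Z
  nabla_smulLeft : ∀ (f : M → ℝ) (X Y : VF), nabla (f • X) Y = f • nabla X Y
  nabla_leibniz : ∀ (X : VF) (f : M → ℝ) (Y : VF),
    nabla X (f • Y) = D X f • Y + f • nabla X Y
  D_add : ∀ X (f₁ f₂ : M → ℝ), D X (f₁ + f₂) = D X f₁ + D X f₂
  D_mul : ∀ X (f₁ f₂ : M → ℝ), D X (f₁ * f₂) = D X f₁ * f₂ + f₁ * D X f₂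
  D_const : ∀ X (r : ℝ), D X (fun _ => r) = 0
  D_addLeft : ∀ X Y (f : M → ℝ), D (X + Y) f = D X f + D Y f
  D_smulLeft : ∀ (h : M → ℝ) X (f : M → ℝ), D (h • X) f = h * D X f
  compat : ∀ X Y Z, D X (g Y Z) = g (nabla X Y) Z + g Y (nabla X Z)
  torsion_free : ∀ X Y, bracket X Y = nabla X Y - nabla Y X
  grad_spec : ∀ (f : M → ℝ) (Z : VF), g (grad f) Z = D Z f

namespace RiemannianSetup

variable {M VF : Type*} [AddCommGroup VF] [Module (M → ℝ) VF]

/-- Covariant derivative `(∇_X A) Y` of a `(1,1)`-tensor `A`. -/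
def covDeriv (S : RiemannianSetup M VF) (A : VF → VF) (X Y : VF) : VF :=
  S.nabla X (A Y) - A (S.nabla X Y)

/-- A Codazzi tensor: a self-adjoint `(1,1)`-tensor with
`(∇_X A) Y = (∇_Y A) X` for all vector fields `X`, `Y`. -/
def IsCodazzi (S : RiemannianSetup M VF) (A : VF → VF) : Prop :=
  (∀ X Y, S.g (A X) Y = S.g X (A Y)) ∧
  (∀ X Y, S.covDeriv A X Y = S.covDeriv A Y X)

end RiemannianSetup

/-! Write the Codazzi equation `(∇_X A) Y = (∇_Y A) X` for two fields `X`, `Y` of `V_λ` and pair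
it with `X`. By the Leibniz rule each side is `(D_X λ) Y + (λ - A) ∇_X Y` (resp. with `X`, `Y`
swapped), and self-adjointness makes `λ - A` take values orthogonal to `V_λ`. What survives is
`(D_Y λ) g(X, X) = (D_X λ) g(Y, X)`, and a unit `X ⊥ Y` gives `D_Y λ = 0`. -/

namespace RiemannianSetup

variable {M VF : Type*} [AddCommGroup VF] [Module (M → ℝ) VF] (S : RiemannianSetup M VF)

theorem g_subLeft (X Y Z : VF) : S.g (X - Y) Z = S.g X Z - S.g Y Z := by
  rw [eq_sub_iff_add_eq, ← S.g_addLeft, sub_add_cancel]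

variable {S} {A : VF → VF} {lam : M → ℝ}

theorem covDeriv_eq_of_apply_eq_smul {Y : VF} (hY : A Y = lam • Y) (X : VF) :
    S.covDeriv A X Y = S.D X lam • Y + (lam • S.nabla X Y - A (S.nabla X Y)) := by
  rw [covDeriv, hY, S.nabla_leibniz, add_sub_assoc]

theorem g_smul_sub_apply_eq_zero_of_apply_eq_smul (hA : ∀ X Y, S.g (A X) Y = S.g X (A Y))
    {X : VF} (hX : A X = lam • X) (W : VF) : S.g (lam • W - A W) X = 0 := by
  rw [S.g_subLeft, S.g_smulLeft, hA, hX, S.g_symm W (lam • X), S.g_smulLeft, S.g_symm X,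
    sub_self]

theorem IsCodazzi.D_eigenvalue_mul_g_eq (hA : S.IsCodazzi A) {X Y : VF}
    (hX : A X = lam • X) (hY : A Y = lam • Y) :
    S.D Y lam * S.g X X = S.D X lam * S.g Y X := by
  have h := congrArg (S.g · X) (hA.2 X Y)
  simp only [covDeriv_eq_of_apply_eq_smul hX, covDeriv_eq_of_apply_eq_smul hY, S.g_addLeft,
    S.g_smulLeft, g_smul_sub_apply_eq_zero_of_apply_eq_smul hA.1 hX, add_zero] at h
  exact h.symm

end RiemannianSetup

/-- If the eigendistribution `V_λ` of a Codazzi tensor has dimension at least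
two at every point (for every `Y ∈ V_λ` there is a unit `X ∈ V_λ` orthogonal
to `Y`), then `D_Y λ = 0` for every `Y ∈ V_λ`. -/
theorem codazzi_eigenvalue_constant_along_eigenspace
    {M VF : Type*} [AddCommGroup VF] [Module (M → ℝ) VF]
    (S : RiemannianSetup M VF) (A : VF → VF) (hA : S.IsCodazzi A)
    (lam : M → ℝ)
    (hdim : ∀ Y : VF, A Y = lam • Y →
      ∃ X : VF, A X = lam • X ∧ S.g X X = 1 ∧ S.g X Y = 0) :
    ∀ Y : VF, A Y = lam • Y → S.D Y lam = 0 := by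
  intro Y hY
  obtain ⟨X, hX, hXX, hXY⟩ := hdim Y hY
  have h := hA.D_eigenvalue_mul_g_eq hX hY
  rwa [hXX, S.g_symm Y X, hXY, mul_one, mul_zero] at h
end

section
/- Let A be a Codazzi tensor on (M,g) with distinct eigenvalue functions λ and μ. If Y ∈ V_λ (i.e. AY = λY) and X, Z ∈ V_μ (i.e. AX = μX and AZ = μZ), then (D_Y μ)·g(X,Z) = (λ − μ)·g(∇_X Y, Z). -/
/-!
Pair the Codazzi identity `(∇_X A) Y = (∇_Y A) X` with `Z`. Since `A` is self-adjoint and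
`A Z = μ Z`, `A` acts as `μ` on the `Z`-component of any vector field, so the left side becomes
`(D_X λ) g(Y,Z) + (λ - μ) g(∇_X Y, Z)` and the right side `(D_Y μ) g(X,Z) + 0`. Finally
`g(Y,Z) = 0`, because eigenvectors of a self-adjoint tensor for pointwise distinct eigenvalues
are orthogonal.
-/

namespace RiemannianSetup

variable {M VF : Type*} [AddCommGroup VF] [Module (M → ℝ) VF] (S : RiemannianSetup M VF)

theorem g_smulRight (f : M → ℝ) (X Y : VF) : S.g X (f • Y) = f * S.g X Y := by
  rw [S.g_symm, S.g_smulLeft, S.g_symm]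

section SelfAdjoint

variable {S} {A : VF → VF} (hA : ∀ X Y, S.g (A X) Y = S.g X (A Y))
include hA

theorem g_apply_left_of_eigen {mu : M → ℝ} {Z : VF} (hZ : A Z = mu • Z) (W : VF) :
    S.g (A W) Z = mu * S.g W Z := by
  rw [hA, hZ, g_smulRight]

theorem g_eq_zero_of_eigen_ne {lam mu : M → ℝ} (hdist : ∀ p, lam p ≠ mu p) {Y Z : VF}
    (hY : A Y = lam • Y) (hZ : A Z = mu • Z) : S.g Y Z = 0 := by
  have hcomm : lam * S.g Y Z = mu * S.g Y Z := by
    rw [← S.g_smulLeft, ← hY, g_apply_left_of_eigen hA hZ]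
  funext p
  exact (mul_eq_mul_right_iff.mp (congrFun hcomm p)).resolve_left (hdist p)

theorem g_covDeriv_of_eigen {lam mu : M → ℝ} {X Y Z : VF} (hY : A Y = lam • Y)
    (hZ : A Z = mu • Z) :
    S.g (S.covDeriv A X Y) Z = S.D X lam * S.g Y Z + (lam - mu) * S.g (S.nabla X Y) Z := by
  rw [covDeriv, hY, S.nabla_leibniz, S.g_subLeft, S.g_addLeft, S.g_smulLeft, S.g_smulLeft,
    g_apply_left_of_eigen hA hZ]
  ring

end SelfAdjoint

end RiemannianSetup

/-- If `A` is a Codazzi tensor with distinct eigenvalue functions `λ` and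
`μ`, `Y ∈ V_λ` and `X, Z ∈ V_μ`, then
`(D_Y μ)·g(X,Z) = (λ − μ)·g(∇_X Y, Z)`. -/
theorem codazzi_eigenvalue_derivative
    {M VF : Type*} [AddCommGroup VF] [Module (M → ℝ) VF]
    (S : RiemannianSetup M VF) (A : VF → VF) (hA : S.IsCodazzi A)
    (lam mu : M → ℝ) (hdist : ∀ p, lam p ≠ mu p)
    (X Y Z : VF)
    (hY : A Y = lam • Y) (hX : A X = mu • X) (hZ : A Z = mu • Z) :
    S.D Y mu * S.g X Z = (lam - mu) * S.g (S.nabla X Y) Z := by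
  obtain ⟨hsa, hcod⟩ := hA
  have hcodZ := congrArg (S.g · Z) (hcod X Y)
  simp only [RiemannianSetup.g_covDeriv_of_eigen hsa hY hZ,
    RiemannianSetup.g_covDeriv_of_eigen hsa hX hZ,
    RiemannianSetup.g_eq_zero_of_eigen_ne hsa hdist hY hZ, sub_self, mul_zero, zero_mul,
    zero_add, add_zero] at hcodZ
  exact hcodZ.symm
end

section
/- Let A be a Codazzi tensor on M^n, n ≥ 3, with exactly two distinct eigenvalue functions μ and λ on an open set, dim V_μ = 1, and let X ∈ V_μ be a unit vector field. Then D_Y μ = (μ − λ)·g(∇_X X, Y) for all Y ∈ V_λ; in particular, D_Y μ = 0 for all Y ∈ V_λ if and only if the integral curves of V_μ are geodesics (∇_X X = 0). -/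
/-!
Pair the Codazzi identity `(∇_Y A) X = (∇_X A) Y` with the unit eigenfield `X`. Since
`g(∇_Y X, X) = 0`, the left side gives `g((∇_Y A) X, X) = D_Y μ`; since `Y ⟂ X`, the right side
gives `g((∇_X A) Y, X) = (μ - λ) g(∇_X X, Y)`. Moreover `∇_X X ⟂ X`, so as `X` and `V_λ` span,
`∇_X X` vanishes exactly when it is orthogonal to `V_λ`, which by the identity (and `μ ≠ λ`)
means `D_Y μ = 0` on `V_λ`.
-/

lemma Pi.eq_zero_of_mul_eq_zero_of_ne_zero {M : Type*} {a f : M → ℝ} (ha : ∀ p, a p ≠ 0)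
    (h : a * f = 0) : f = 0 :=
  funext fun p => (mul_eq_zero.mp (congrFun h p)).resolve_left (ha p)

namespace RiemannianSetup

variable {M VF : Type*} [AddCommGroup VF] [Module (M → ℝ) VF] (S : RiemannianSetup M VF)

lemma g_zero_left (Z : VF) : S.g 0 Z = 0 := by
  rw [← zero_smul (M → ℝ) (0 : VF), S.g_smulLeft, zero_mul]

lemma g_sub_left (U V Z : VF) : S.g (U - V) Z = S.g U Z - S.g V Z := by
  rw [sub_eq_add_neg, S.g_addLeft, ← neg_one_smul (M → ℝ) V, S.g_smulLeft]
  ring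

lemma g_smul_right (f : M → ℝ) (U V : VF) : S.g U (f • V) = f * S.g U V := by
  rw [S.g_symm, S.g_smulLeft, S.g_symm]

lemma g_add_right (U V W : VF) : S.g U (V + W) = S.g U V + S.g U W := by
  rw [S.g_symm, S.g_addLeft, S.g_symm V U, S.g_symm W U]

lemma D_zero (X : VF) : S.D X 0 = 0 :=
  S.D_const X 0

lemma D_one (X : VF) : S.D X 1 = 0 :=
  S.D_const X 1

lemma g_nabla_self_eq_zero_of_unit {X : VF} (hX : S.g X X = 1) (W : VF) :
    S.g (S.nabla W X) X = 0 := by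
  have h := S.compat W X X
  rw [hX, D_one, S.g_symm X (S.nabla W X)] at h
  exact Pi.eq_zero_of_mul_eq_zero_of_ne_zero (a := 2) (fun _ => two_ne_zero)
    (by linear_combination -h)

lemma g_nabla_eq_neg_of_orthogonal {X Y : VF} (hYX : S.g Y X = 0) :
    S.g (S.nabla X Y) X = -S.g (S.nabla X X) Y := by
  have h := S.compat X Y X
  rw [hYX, D_zero, S.g_symm Y] at h
  linear_combination -h

lemma eq_zero_of_forall_g_eq_zero {V : VF} (h : ∀ Z, S.g V Z = 0) : V = 0 :=
  S.g_nondeg V 0 fun Z => by rw [h, g_zero_left]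

variable {A : VF → VF} {mu lam : M → ℝ} {X Y : VF}

lemma g_eq_zero_of_eigenvalues_ne (hsym : ∀ X Y, S.g (A X) Y = S.g X (A Y))
    (hdist : ∀ p, mu p ≠ lam p) (hX : A X = mu • X) (hY : A Y = lam • Y) :
    S.g Y X = 0 := by
  have h := hsym Y X
  rw [hY, hX, S.g_smulLeft, g_smul_right] at h
  exact Pi.eq_zero_of_mul_eq_zero_of_ne_zero (a := mu - lam) (fun p => sub_ne_zero.mpr (hdist p))
    (by linear_combination -h)

lemma g_covDeriv_unit_eigen (hsym : ∀ X Y, S.g (A X) Y = S.g X (A Y))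
    (hX : A X = mu • X) (hXunit : S.g X X = 1) (Y : VF) :
    S.g (S.covDeriv A Y X) X = S.D Y mu := by
  rw [covDeriv, g_sub_left, hX, S.nabla_leibniz, S.g_addLeft, S.g_smulLeft, S.g_smulLeft,
    hXunit, hsym, hX, g_smul_right, S.g_nabla_self_eq_zero_of_unit hXunit]
  ring

lemma g_covDeriv_orthogonal_eigen (hsym : ∀ X Y, S.g (A X) Y = S.g X (A Y))
    (hX : A X = mu • X) (hY : A Y = lam • Y) (hYX : S.g Y X = 0) :
    S.g (S.covDeriv A X Y) X = (mu - lam) * S.g (S.nabla X X) Y := by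
  rw [covDeriv, g_sub_left, hY, S.nabla_leibniz, S.g_addLeft, S.g_smulLeft, S.g_smulLeft,
    hYX, hsym, hX, g_smul_right, S.g_nabla_eq_neg_of_orthogonal hYX]
  ring

lemma D_eigenvalue_eq_of_isCodazzi (hA : S.IsCodazzi A) (hdist : ∀ p, mu p ≠ lam p)
    (hX : A X = mu • X) (hXunit : S.g X X = 1) (hY : A Y = lam • Y) :
    S.D Y mu = (mu - lam) * S.g (S.nabla X X) Y := by
  rw [← S.g_covDeriv_unit_eigen hA.1 hX hXunit, hA.2 Y X,
    S.g_covDeriv_orthogonal_eigen hA.1 hX hY (S.g_eq_zero_of_eigenvalues_ne hA.1 hdist hX hY)]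

end RiemannianSetup

open RiemannianSetup in
theorem codazzi_mu_derivative_and_geodesic_general
    {M VF : Type*} [AddCommGroup VF] [Module (M → ℝ) VF]
    (S : RiemannianSetup M VF) (A : VF → VF) (hA : S.IsCodazzi A)
    (mu lam : M → ℝ) (hdist : ∀ p, mu p ≠ lam p)
    (X : VF) (hX : A X = mu • X) (hXunit : S.g X X = 1)
    (hdecomp : ∀ Z : VF, ∃ (c : M → ℝ) (Y : VF),
      A Y = lam • Y ∧ Z = c • X + Y) :
    (∀ Y : VF, A Y = lam • Y →
      S.D Y mu = (mu - lam) * S.g (S.nabla X X) Y) ∧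
    ((∀ Y : VF, A Y = lam • Y → S.D Y mu = 0) ↔ S.nabla X X = 0) := by
  have key := fun Y (hY : A Y = lam • Y) => S.D_eigenvalue_eq_of_isCodazzi hA hdist hX hXunit hY
  refine ⟨key, fun hD => S.eq_zero_of_forall_g_eq_zero fun Z => ?_, fun h0 Y hY => ?_⟩
  · obtain ⟨c, Y, hY, rfl⟩ := hdecomp Z
    have hY0 : S.g (S.nabla X X) Y = 0 :=
      Pi.eq_zero_of_mul_eq_zero_of_ne_zero (a := mu - lam) (fun p => sub_ne_zero.mpr (hdist p))
        ((key Y hY).symm.trans (hD Y hY))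
    rw [g_add_right, g_smul_right, S.g_nabla_self_eq_zero_of_unit hXunit, hY0, mul_zero,
      add_zero]
  · rw [key Y hY, h0, g_zero_left, mul_zero]

/-- For a Codazzi tensor with exactly two distinct eigenfunctions `μ`, `λ`,
`dim V_μ = 1` spanned by the unit field `X`:
`D_Y μ = (μ − λ) g(∇_X X, Y)` for all `Y ∈ V_λ`, and `D_Y μ = 0` for all
`Y ∈ V_λ` iff the integral curves of `V_μ` are geodesics (`∇_X X = 0`). -/
theorem codazzi_mu_derivative_and_geodesic
    {M VF : Type*} [AddCommGroup VF] [Module (M → ℝ) VF]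
    (n : ℕ) (hn : 3 ≤ n)
    (S : RiemannianSetup M VF) (A : VF → VF) (hA : S.IsCodazzi A)
    (mu lam : M → ℝ) (hdist : ∀ p, mu p ≠ lam p)
    (X : VF) (hX : A X = mu • X) (hXunit : S.g X X = 1)
    (hdecomp : ∀ Z : VF, ∃ (c : M → ℝ) (Y : VF),
      A Y = lam • Y ∧ Z = c • X + Y) :
    (∀ Y : VF, A Y = lam • Y →
      S.D Y mu = (mu - lam) * S.g (S.nabla X X) Y) ∧
    ((∀ Y : VF, A Y = lam • Y → S.D Y mu = 0) ↔ S.nabla X X = 0) :=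
  codazzi_mu_derivative_and_geodesic_general S A hA mu lam hdist X hX hXunit hdecomp
end

section
/- On an open set U ⊂ ℝ³ with coordinates (t,x,y), let λ > 0 be constant and μ smooth with μ ≠ λ on U. Define the metric g = (λ − μ)^{-2} dt² + λ dx² + λ dy² and the (1,1)-tensor A by A∂_t = μ ∂_t, A∂_x = λ ∂_x, A∂_y = λ ∂_y. Then A is a Codazzi tensor for g. -/
open Matrix

/-- Partial derivative in the `i`-th coordinate direction on `ℝ³`. -/
noncomputable def pderiv3 (i : Fin 3) (f : (Fin 3 → ℝ) → ℝ) (x : Fin 3 → ℝ) : ℝ :=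
  fderiv ℝ f x (Pi.single i 1)

/-- Christoffel symbols `Γ^m_{pq}` of a metric given as a matrix field. -/
noncomputable def christoffel (g : (Fin 3 → ℝ) → Matrix (Fin 3) (Fin 3) ℝ)
    (m p q : Fin 3) (x : Fin 3 → ℝ) : ℝ :=
  (1 / 2) * ∑ l, (g x)⁻¹ m l *
    (pderiv3 q (fun y => g y p l) x + pderiv3 p (fun y => g y q l) x
      - pderiv3 l (fun y => g y p q) x)

/-- The Hessian `Hess f(∂_i, ∂_j) = ∂_i ∂_j f − Γ^k_{ij} ∂_k f`. -/
noncomputable def hess (g : (Fin 3 → ℝ) → Matrix (Fin 3) (Fin 3) ℝ)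
    (f : (Fin 3 → ℝ) → ℝ) (i j : Fin 3) (x : Fin 3 → ℝ) : ℝ :=
  pderiv3 i (fun y => pderiv3 j f y) x
    - ∑ k, christoffel g k i j x * pderiv3 k f x

/-- The metric `g = (λ − μ)^{-2} dt² + λ dx² + λ dy²` in coordinates
`(t, x, y) = (x 0, x 1, x 2)`. -/
noncomputable def gMet (lam : ℝ) (mu : (Fin 3 → ℝ) → ℝ) (x : Fin 3 → ℝ) :
    Matrix (Fin 3) (Fin 3) ℝ :=
  Matrix.diagonal ![((lam - mu x) ^ 2)⁻¹, lam, lam]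

/-- The `(1,1)`-tensor `A∂_t = μ ∂_t`, `A∂_x = λ ∂_x`, `A∂_y = λ ∂_y`. -/
noncomputable def aMat (lam : ℝ) (mu : (Fin 3 → ℝ) → ℝ) (x : Fin 3 → ℝ) :
    Matrix (Fin 3) (Fin 3) ℝ :=
  Matrix.diagonal ![mu x, lam, lam]

/-- Covariant derivative `(∇_k A)^m_j` of a `(1,1)`-tensor field `A` with
respect to the metric `g`. -/
noncomputable def covDerivT (g A : (Fin 3 → ℝ) → Matrix (Fin 3) (Fin 3) ℝ)
    (k : Fin 3) (x : Fin 3 → ℝ) (m j : Fin 3) : ℝ :=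
  pderiv3 k (fun y => A y m j) x
    + ∑ l, christoffel g m k l x * A x l j
    - ∑ l, christoffel g l k j x * A x m l

lemma pderiv3_const_of (f : (Fin 3 → ℝ) → ℝ) (c : ℝ) (h : ∀ y, f y = c)
    (i : Fin 3) (x : Fin 3 → ℝ) : pderiv3 i f x = 0 := by
  rw [pderiv3, show f = fun _ => c from funext h, fderiv_fun_const]
  simp

set_option maxHeartbeats 1600000 in
/-- The tensor `A∂_t = μ∂_t`, `A∂_x = λ∂_x`, `A∂_y = λ∂_y` is a Codazzi
tensor for the metric `g = (λ−μ)^{-2} dt² + λ dx² + λ dy²`: it is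
self-adjoint and `(∇_p A)^m_q = (∇_q A)^m_p`. -/
theorem aMat_isCodazzi
    (lam : ℝ) (hlam : 0 < lam) (mu : (Fin 3 → ℝ) → ℝ)
    (U : Set (Fin 3 → ℝ)) (hU : IsOpen U)
    (hmu : ContDiffOn ℝ (⊤ : ℕ∞) mu U)
    (hne : ∀ x ∈ U, mu x ≠ lam) :
    ∀ x ∈ U,
      (∀ i j : Fin 3,
        ∑ l, gMet lam mu x i l * aMat lam mu x l j
          = ∑ l, gMet lam mu x j l * aMat lam mu x l i) ∧
      (∀ p q m : Fin 3,
        covDerivT (gMet lam mu) (aMat lam mu) p x m q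
          = covDerivT (gMet lam mu) (aMat lam mu) q x m p) := by
  intro x hx
  have hd : DifferentiableAt ℝ mu x :=
    ((hmu.contDiffAt (hU.mem_nhds hx)).differentiableAt (by simp))
  have hν : lam - mu x ≠ 0 := sub_ne_zero.mpr (Ne.symm (hne x hx))
  have hl : lam ≠ 0 := ne_of_gt hlam
  set D : Fin 3 → ℝ := fun i => fderiv ℝ mu x (Pi.single i 1) with hD
  -- derivative of g_{00}
  have hf00 : ∀ i, pderiv3 i (fun y => gMet lam mu y 0 0) x
      = 2 * ((lam - mu x) ^ 3)⁻¹ * D i := by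
    intro i
    have h1 : HasFDerivAt (fun y => lam - mu y) (-(fderiv ℝ mu x)) x :=
      hd.hasFDerivAt.const_sub lam
    have h2 := h1.mul h1
    have h3 : HasFDerivAt (fun y => ((lam - mu y) * (lam - mu y))⁻¹)
        (((-(ContinuousLinearMap.mulLeftRight ℝ ℝ ((lam - mu x) * (lam - mu x))⁻¹)
            ((lam - mu x) * (lam - mu x))⁻¹)).comp
          ((lam - mu x) • -fderiv ℝ mu x + (lam - mu x) • -fderiv ℝ mu x)) x :=
      (hasFDerivAt_inv' (𝕜 := ℝ) (mul_ne_zero hν hν)).comp x h2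
    have heq : (fun y => gMet lam mu y 0 0)
        = fun y => ((lam - mu y) * (lam - mu y))⁻¹ := by
      funext y; simp [gMet, sq]
    rw [pderiv3, heq, h3.fderiv]
    simp only [ContinuousLinearMap.comp_apply, ContinuousLinearMap.neg_apply,
      ContinuousLinearMap.mulLeftRight_apply, ContinuousLinearMap.add_apply,
      ContinuousLinearMap.smul_apply, smul_eq_mul, _root_.mul_inv_rev]
    field_simp
    ring
  -- derivatives of all metric entries
  have hpg : ∀ (i p q : Fin 3), pderiv3 i (fun y => gMet lam mu y p q) x
      = if p = 0 ∧ q = 0 then 2 * ((lam - mu x) ^ 3)⁻¹ * D i else 0 := by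
    intro i p q
    fin_cases p <;> fin_cases q <;>
      simp only [Fin.isValue, Fin.zero_eta, Fin.mk_one, and_self, and_true, and_false,
        false_and, if_true, if_false, reduceCtorEq, ite_true, ite_false, one_ne_zero]
    · exact hf00 i
    · exact pderiv3_const_of _ 0 (fun y => by simp [gMet, Matrix.diagonal_apply]) _ _
    · exact pderiv3_const_of _ 0 (fun y => by simp [gMet, Matrix.diagonal_apply]) _ _
    · exact pderiv3_const_of _ 0 (fun y => by simp [gMet, Matrix.diagonal_apply]) _ _
    · exact pderiv3_const_of _ lam (fun y => by simp [gMet, Matrix.diagonal_apply]) _ _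
    · exact pderiv3_const_of _ 0 (fun y => by simp [gMet, Matrix.diagonal_apply]) _ _
    · exact pderiv3_const_of _ 0 (fun y => by simp [gMet, Matrix.diagonal_apply]) _ _
    · exact pderiv3_const_of _ 0 (fun y => by simp [gMet, Matrix.diagonal_apply]) _ _
    · exact pderiv3_const_of _ lam (fun y => by simp [gMet, Matrix.diagonal_apply]) _ _
  -- inverse metric
  have hinv : (gMet lam mu x)⁻¹
      = Matrix.diagonal ![(lam - mu x) ^ 2, lam⁻¹, lam⁻¹] := by
    apply Matrix.inv_eq_right_inv
    ext i j
    fin_cases i <;> fin_cases j <;>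
      simp [gMet, Matrix.mul_apply, Fin.sum_univ_three, hν, hl]
  -- Christoffel symbols
  have hC : ∀ m p q, christoffel (gMet lam mu) m p q x
      = if m = 0 then
          (if p = 0 then D q * (lam - mu x)⁻¹
           else if q = 0 then D p * (lam - mu x)⁻¹ else 0)
        else
          (if p = 0 ∧ q = 0 then -(lam⁻¹ * ((lam - mu x) ^ 3)⁻¹ * D m) else 0) := by
    intro m p q
    rw [christoffel, hinv]
    fin_cases m <;> fin_cases p <;> fin_cases q <;>
      simp [Fin.sum_univ_three, hpg, Matrix.diagonal_apply] <;>
      field_simp <;> ring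
  have hz : ∀ (k : Fin 3) (c : ℝ), pderiv3 k (fun _ => c) x = 0 := by
    intro k c; rw [pderiv3, fderiv_fun_const]; simp
  have hmu' : ∀ k, pderiv3 k (fun y => mu y) x = D k := fun k => rfl
  refine ⟨?_, ?_⟩
  · intro i j
    fin_cases i <;> fin_cases j <;>
      simp [gMet, aMat, Fin.sum_univ_three, Matrix.diagonal_apply]
  · intro p q m
    fin_cases p <;> fin_cases q <;> fin_cases m <;>
      simp [covDerivT, Fin.sum_univ_three, hC, aMat, Matrix.diagonal_apply, hz, hmu'] <;>
      field_simp <;> ring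
end

section
/- Let μ(x,y) = (1/2) sin x cos y, and on ℝ³ define g = (1 − μ)^{-2} dt² + dx² + dy². Then g and the Codazzi tensor A (with A∂_t = μ∂_t, A∂_x = ∂_x, A∂_y = ∂_y) are periodic in all three coordinates and descend to the torus T³ = S¹×S¹×S¹; moreover g is not a warped product with one-dimensional base in any neighborhood of the point [(0,0,0)]: any smooth f with Hess f = a·g near that point has ∇f = 0 there. -/
open Matrix

open Real

namespace TNW

noncomputable def Pr (i : Fin 3) : (Fin 3 → ℝ) →L[ℝ] ℝ := ContinuousLinearMap.proj i

@[simp] lemma Pr_apply (i : Fin 3) (v : Fin 3 → ℝ) : Pr i v = v i := rfl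

def HD (F : (Fin 3 → ℝ) → ℝ) (A B : ℝ) (x : Fin 3 → ℝ) : Prop :=
  HasFDerivAt F (A • Pr 1 + B • Pr 2) x

variable {F G : (Fin 3 → ℝ) → ℝ} {A B C D A' B' : ℝ} {x : Fin 3 → ℝ}

lemma HD.of_hasF {L : (Fin 3 → ℝ) →L[ℝ] ℝ} (h : HasFDerivAt F L x)
    (hL : ∀ v, L v = A * v 1 + B * v 2) : HD F A B x := by
  have : L = A • Pr 1 + B • Pr 2 := by
    refine ContinuousLinearMap.ext fun v => ?_
    simp [hL v]
  rw [HD, ← this]; exact h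

lemma HD.hasF (h : HD F A B x) : HasFDerivAt F (A • Pr 1 + B • Pr 2) x := h

lemma HD.congr_coef (h : HD F A B x) (h1 : A = A') (h2 : B = B') : HD F A' B' x := by
  rw [← h1, ← h2]; exact h

lemma HD.congr_fun (h : HD F A B x) (hFG : ∀ y, G y = F y) : HD G A B x := by
  have : F = G := by funext y; exact (hFG y).symm
  exact this ▸ h

lemma HD.diffAt (h : HD F A B x) : DifferentiableAt ℝ F x := h.hasF.differentiableAt

lemma HD.pd (h : HD F A B x) (i : Fin 3) :
    pderiv3 i F x = A * (Pi.single i (1:ℝ) : Fin 3 → ℝ) 1 + B * (Pi.single i (1:ℝ) : Fin 3 → ℝ) 2 := by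
  rw [pderiv3, h.hasF.fderiv]; simp

lemma HD.pd0 (h : HD F A B x) : pderiv3 0 F x = 0 := by
  rw [h.pd 0]; simp [Pi.single_apply]

lemma HD.pd1 (h : HD F A B x) : pderiv3 1 F x = A := by
  rw [h.pd 1]; simp [Pi.single_apply]

lemma HD.pd2 (h : HD F A B x) : pderiv3 2 F x = B := by
  rw [h.pd 2]; simp [Pi.single_apply]

lemma hdConst (c : ℝ) (x : Fin 3 → ℝ) : HD (fun _ => c) 0 0 x :=
  HD.of_hasF (hasFDerivAt_const c x) (by simp)

lemma HD.add (hF : HD F A B x) (hG : HD G C D x) :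
    HD (fun y => F y + G y) (A + C) (B + D) x :=
  HD.of_hasF (hF.hasF.add hG.hasF) (by intro v; simp; ring)

lemma HD.sub (hF : HD F A B x) (hG : HD G C D x) :
    HD (fun y => F y - G y) (A - C) (B - D) x :=
  HD.of_hasF (hF.hasF.sub hG.hasF) (by intro v; simp; ring)

lemma HD.neg (hF : HD F A B x) : HD (fun y => -(F y)) (-A) (-B) x :=
  HD.of_hasF hF.hasF.neg (by intro v; simp; ring)

lemma HD.mul (hF : HD F A B x) (hG : HD G C D x) :
    HD (fun y => F y * G y) (A * G x + F x * C) (B * G x + F x * D) x :=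
  HD.of_hasF (hF.hasF.mul hG.hasF) (by intro v; simp; ring)

lemma HD.const_mul (hF : HD F A B x) (c : ℝ) : HD (fun y => c * F y) (c * A) (c * B) x :=
  HD.of_hasF (hF.hasF.const_mul c) (by intro v; simp; ring)

lemma HD.inv (hF : HD F A B x) (h0 : F x ≠ 0) :
    HD (fun y => (F y)⁻¹) (-(F x ^ 2)⁻¹ * A) (-(F x ^ 2)⁻¹ * B) x := by
  have h := (hasDerivAt_inv h0).comp_hasFDerivAt x hF.hasF
  exact HD.of_hasF h (by intro v; simp; ring)

lemma hd_coord (j : Fin 3) (x : Fin 3 → ℝ) : HasFDerivAt (fun y : Fin 3 → ℝ => y j) (Pr j) x :=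
  (Pr j).hasFDerivAt

lemma hd_sin1 (x : Fin 3 → ℝ) : HD (fun y => Real.sin (y 1)) (Real.cos (x 1)) 0 x :=
  HD.of_hasF (hd_coord 1 x).sin (by intro v; simp)

lemma hd_cos1 (x : Fin 3 → ℝ) : HD (fun y => Real.cos (y 1)) (-Real.sin (x 1)) 0 x :=
  HD.of_hasF (hd_coord 1 x).cos (by intro v; simp)

lemma hd_sin2 (x : Fin 3 → ℝ) : HD (fun y => Real.sin (y 2)) 0 (Real.cos (x 2)) x :=
  HD.of_hasF (hd_coord 2 x).sin (by intro v; simp)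

lemma hd_cos2 (x : Fin 3 → ℝ) : HD (fun y => Real.cos (y 2)) 0 (-Real.sin (x 2)) x :=
  HD.of_hasF (hd_coord 2 x).cos (by intro v; simp)


noncomputable def m0 (y : Fin 3 → ℝ) : ℝ := 1 / 2 * Real.sin (y 1) * Real.cos (y 2)
noncomputable def m1 (y : Fin 3 → ℝ) : ℝ := 1 / 2 * Real.cos (y 1) * Real.cos (y 2)
noncomputable def m2 (y : Fin 3 → ℝ) : ℝ := -(1 / 2) * Real.sin (y 1) * Real.sin (y 2)
noncomputable def nu (y : Fin 3 → ℝ) : ℝ := -(1 / 2) * Real.cos (y 1) * Real.sin (y 2)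
noncomputable def ip (y : Fin 3 → ℝ) : ℝ := (1 - m0 y)⁻¹

lemma m0_lt_one (y : Fin 3 → ℝ) : m0 y < 1 := by
  have h1 := Real.neg_one_le_sin (y 1)
  have h2 := Real.sin_le_one (y 1)
  have h3 := Real.neg_one_le_cos (y 2)
  have h4 := Real.cos_le_one (y 2)
  unfold m0; nlinarith

lemma one_sub_m0_pos (y : Fin 3 → ℝ) : 0 < 1 - m0 y := by linarith [m0_lt_one y]

lemma one_sub_m0_ne (y : Fin 3 → ℝ) : 1 - m0 y ≠ 0 := (one_sub_m0_pos y).ne'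

lemma ip_mul_cancel (y : Fin 3 → ℝ) : (1 - m0 y) * ip y = 1 :=
  mul_inv_cancel₀ (one_sub_m0_ne y)

variable {x : Fin 3 → ℝ}

lemma hd_m0 (x : Fin 3 → ℝ) : HD m0 (m1 x) (m2 x) x :=
  ((((hd_sin1 x).const_mul (1/2)).mul (hd_cos2 x)).congr_coef
    (by unfold m1; ring) (by unfold m2; ring)).congr_fun (fun y => by unfold m0; ring)

lemma hd_m1 (x : Fin 3 → ℝ) : HD m1 (-(m0 x)) (nu x) x :=
  ((((hd_cos1 x).const_mul (1/2)).mul (hd_cos2 x)).congr_coef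
    (by unfold m0; ring) (by unfold nu; ring)).congr_fun (fun y => by unfold m1; ring)

lemma hd_m2 (x : Fin 3 → ℝ) : HD m2 (nu x) (-(m0 x)) x :=
  ((((hd_sin1 x).const_mul (-(1/2))).mul (hd_sin2 x)).congr_coef
    (by unfold nu; ring) (by unfold m0; ring)).congr_fun (fun y => by unfold m2; ring)

lemma hd_ip (x : Fin 3 → ℝ) : HD ip ((ip x)^2 * m1 x) ((ip x)^2 * m2 x) x := by
  have h1 : HD (fun y => 1 - m0 y) (0 - m1 x) (0 - m2 x) x := (hdConst 1 x).sub (hd_m0 x)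
  have h2 := h1.inv (by simpa using one_sub_m0_ne x)
  refine (h2.congr_coef ?_ ?_).congr_fun (fun y => rfl) <;>
    · unfold ip; rw [← inv_pow]; ring

end TNW

namespace TNW

lemma pderiv3_const (i : Fin 3) (c : ℝ) (x : Fin 3 → ℝ) :
    pderiv3 i (fun _ => c) x = 0 := by
  simp [pderiv3]

lemma hd_psi (x : Fin 3 → ℝ) :
    HD (fun y => ((1 - m0 y) ^ 2)⁻¹) (2 * m1 x * ip x ^ 3) (2 * m2 x * ip x ^ 3) x := by
  have h1 : HD (fun y => 1 - m0 y) (0 - m1 x) (0 - m2 x) x := (hdConst 1 x).sub (hd_m0 x)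
  have h2 : HD (fun y => (1 - m0 y) * (1 - m0 y))
      ((0 - m1 x) * (1 - m0 x) + (1 - m0 x) * (0 - m1 x))
      ((0 - m2 x) * (1 - m0 x) + (1 - m0 x) * (0 - m2 x)) x := h1.mul h1
  have h3 := h2.inv (by simpa using mul_ne_zero (one_sub_m0_ne x) (one_sub_m0_ne x))
  have key := ip_mul_cancel x
  refine (h3.congr_coef ?_ ?_).congr_fun (fun y => by rw [pow_two]) <;>
    · have h4 : (((1 - m0 x) * (1 - m0 x)) ^ 2)⁻¹ = ip x ^ 4 := by
        rw [show ((1 - m0 x) * (1 - m0 x)) ^ 2 = (1 - m0 x) ^ 4 by ring]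
        rw [show ip x = (1 - m0 x)⁻¹ from rfl, ← inv_pow]
      rw [h4]
      first
      | linear_combination (2 * m1 x * ip x ^ 3) * key
      | linear_combination (2 * m2 x * ip x ^ 3) * key

lemma ginv_gMet (x : Fin 3 → ℝ) :
    (gMet 1 m0 x)⁻¹ = Matrix.diagonal ![(1 - m0 x) ^ 2, 1, 1] := by
  apply Matrix.inv_eq_right_inv
  rw [gMet, Matrix.diagonal_mul_diagonal]
  ext i j
  fin_cases i <;> fin_cases j <;>
    simp [Matrix.diagonal_apply, Matrix.one_apply,
      inv_mul_cancel₀ (pow_ne_zero 2 (one_sub_m0_ne x))]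

lemma gfun00 : (fun y => gMet 1 m0 y 0 0) = fun y => ((1 - m0 y) ^ 2)⁻¹ := by
  funext y; simp [gMet]
lemma gfun11 : (fun y => gMet 1 m0 y 1 1) = fun _ => (1:ℝ) := by funext y; simp [gMet]
lemma gfun22 : (fun y => gMet 1 m0 y 2 2) = fun _ => (1:ℝ) := by funext y; simp [gMet]
lemma gfun01 : (fun y => gMet 1 m0 y 0 1) = fun _ => (0:ℝ) := by
  funext y; simp [gMet, Matrix.diagonal_apply]
lemma gfun10 : (fun y => gMet 1 m0 y 1 0) = fun _ => (0:ℝ) := by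
  funext y; simp [gMet, Matrix.diagonal_apply]
lemma gfun02 : (fun y => gMet 1 m0 y 0 2) = fun _ => (0:ℝ) := by
  funext y; simp [gMet, Matrix.diagonal_apply]
lemma gfun20 : (fun y => gMet 1 m0 y 2 0) = fun _ => (0:ℝ) := by
  funext y; simp [gMet, Matrix.diagonal_apply]
lemma gfun12 : (fun y => gMet 1 m0 y 1 2) = fun _ => (0:ℝ) := by
  funext y; simp [gMet, Matrix.diagonal_apply]
lemma gfun21 : (fun y => gMet 1 m0 y 2 1) = fun _ => (0:ℝ) := by
  funext y; simp [gMet, Matrix.diagonal_apply]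

noncomputable def Chr (k i j : Fin 3) (x : Fin 3 → ℝ) : ℝ :=
  ![![![0, m1 x * ip x, m2 x * ip x],
     ![m1 x * ip x, 0, 0],
     ![m2 x * ip x, 0, 0]],
    ![![-(m1 x) * ip x ^ 3, 0, 0], ![0, 0, 0], ![0, 0, 0]],
    ![![-(m2 x) * ip x ^ 3, 0, 0], ![0, 0, 0], ![0, 0, 0]]] k i j

lemma christoffel_eq (k i j : Fin 3) (x : Fin 3 → ℝ) :
    christoffel (gMet 1 m0) k i j x = Chr k i j x := by
  have e0 := (hd_psi x).pd0
  have e1 := (hd_psi x).pd1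
  have e2 := (hd_psi x).pd2
  have key : (1:ℝ) - m0 x = (ip x)⁻¹ := by rw [ip, inv_inv]
  have ipne : ip x ≠ 0 := by rw [ip]; exact inv_ne_zero (one_sub_m0_ne x)
  fin_cases k <;> fin_cases i <;> fin_cases j <;>
    simp only [christoffel, ginv_gMet, Fin.sum_univ_three] <;>
    simp [Matrix.diagonal_apply, Chr] <;>
    simp only [gfun00, gfun11, gfun22, gfun01, gfun10, gfun02, gfun20, gfun12, gfun21,
      e0, e1, e2, pderiv3_const] <;>
    (try simp [Matrix.vecHead, Matrix.vecTail]) <;>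
    (try rw [key]) <;> (try field_simp [ipne]) <;> (try ring)

lemma pderiv3_congr {F G : (Fin 3 → ℝ) → ℝ} {x : Fin 3 → ℝ} (h : F =ᶠ[nhds x] G) (i : Fin 3) :
    pderiv3 i F x = pderiv3 i G x := by
  rw [pderiv3, pderiv3, h.fderiv_eq]

lemma pderiv3_mul {F G : (Fin 3 → ℝ) → ℝ} {x : Fin 3 → ℝ}
    (hF : DifferentiableAt ℝ F x) (hG : DifferentiableAt ℝ G x) (i : Fin 3) :
    pderiv3 i (fun y => F y * G y) x = pderiv3 i F x * G x + F x * pderiv3 i G x := by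
  rw [pderiv3, fderiv_fun_mul hF hG]
  simp [pderiv3]
  ring

lemma pderiv3_add {F G : (Fin 3 → ℝ) → ℝ} {x : Fin 3 → ℝ}
    (hF : DifferentiableAt ℝ F x) (hG : DifferentiableAt ℝ G x) (i : Fin 3) :
    pderiv3 i (fun y => F y + G y) x = pderiv3 i F x + pderiv3 i G x := by
  rw [pderiv3, fderiv_fun_add hF hG]
  simp [pderiv3]

lemma schwarz {v : (Fin 3 → ℝ) → ℝ} {U : Set (Fin 3 → ℝ)} (hU : IsOpen U)
    (hv : ContDiffOn ℝ (⊤ : ℕ∞) v U) {x : Fin 3 → ℝ} (hx : x ∈ U) (i j : Fin 3) :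
    pderiv3 i (fun y => pderiv3 j v y) x = pderiv3 j (fun y => pderiv3 i v y) x := by
  have hdiff : DifferentiableOn ℝ v U := hv.differentiableOn (by simp)
  have hev : ∀ᶠ y in nhds x, HasFDerivAt v (fderiv ℝ v y) y := by
    filter_upwards [hU.mem_nhds hx] with y hy
    exact (hdiff.differentiableAt (hU.mem_nhds hy)).hasFDerivAt
  have hD : ContDiffOn ℝ (⊤ : ℕ∞) (fderiv ℝ v) U := hv.fderiv_of_isOpen hU (by simp)
  have hD2 : HasFDerivAt (fderiv ℝ v) (fderiv ℝ (fderiv ℝ v) x) x :=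
    ((hD.differentiableOn (by simp)).differentiableAt (hU.mem_nhds hx)).hasFDerivAt
  have hsym := second_derivative_symmetric_of_eventually hev hD2 (Pi.single i 1) (Pi.single j 1)
  have key : ∀ p q : Fin 3, pderiv3 p (fun y => pderiv3 q v y) x
      = fderiv ℝ (fderiv ℝ v) x (Pi.single p 1) (Pi.single q 1) := by
    intro p q
    have h1 := hD2.clm_apply (hasFDerivAt_const (Pi.single q (1:ℝ)) x)
    simp only [pderiv3]
    rw [h1.fderiv]
    simp
  rw [key i j, key j i, hsym]

end TNW

namespace TNW

lemma psi_eq (x : Fin 3 → ℝ) : ((1 - m0 x) ^ 2)⁻¹ = ip x ^ 2 := by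
  rw [ip, inv_pow]

lemma hess_eq (f : (Fin 3 → ℝ) → ℝ) (i j : Fin 3) (x : Fin 3 → ℝ) :
    hess (gMet 1 m0) f i j x = pderiv3 i (fun y => pderiv3 j f y) x
      - (Chr 0 i j x * pderiv3 0 f x + Chr 1 i j x * pderiv3 1 f x
          + Chr 2 i j x * pderiv3 2 f x) := by
  rw [hess, Fin.sum_univ_three, christoffel_eq, christoffel_eq, christoffel_eq]

section eqs

variable {U : Set (Fin 3 → ℝ)} {f a : (Fin 3 → ℝ) → ℝ}
variable (heq : ∀ x ∈ U, ∀ i j : Fin 3, hess (gMet 1 m0) f i j x = a x * gMet 1 m0 x i j)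
variable {x : Fin 3 → ℝ} (hx : x ∈ U)
include heq hx

lemma e11 : pderiv3 1 (fun y => pderiv3 1 f y) x = a x := by
  have h := heq x hx 1 1
  rw [hess_eq] at h
  simpa [Chr, gMet, Matrix.diagonal_apply, Matrix.vecHead, Matrix.vecTail] using h

lemma e22 : pderiv3 2 (fun y => pderiv3 2 f y) x = a x := by
  have h := heq x hx 2 2
  rw [hess_eq] at h
  simpa [Chr, gMet, Matrix.diagonal_apply, Matrix.vecHead, Matrix.vecTail] using h

lemma e12 : pderiv3 1 (fun y => pderiv3 2 f y) x = 0 := by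
  have h := heq x hx 1 2
  rw [hess_eq] at h
  simpa [Chr, gMet, Matrix.diagonal_apply, Matrix.vecHead, Matrix.vecTail] using h

lemma e21 : pderiv3 2 (fun y => pderiv3 1 f y) x = 0 := by
  have h := heq x hx 2 1
  rw [hess_eq] at h
  simpa [Chr, gMet, Matrix.diagonal_apply, Matrix.vecHead, Matrix.vecTail] using h

lemma e10 : pderiv3 1 (fun y => pderiv3 0 f y) x = m1 x * ip x * pderiv3 0 f x := by
  have h := heq x hx 1 0
  rw [hess_eq] at h
  simp [Chr, gMet, Matrix.diagonal_apply, Matrix.vecHead, Matrix.vecTail] at h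
  linarith

lemma e01 : pderiv3 0 (fun y => pderiv3 1 f y) x = m1 x * ip x * pderiv3 0 f x := by
  have h := heq x hx 0 1
  rw [hess_eq] at h
  simp [Chr, gMet, Matrix.diagonal_apply, Matrix.vecHead, Matrix.vecTail] at h
  linarith

lemma e20 : pderiv3 2 (fun y => pderiv3 0 f y) x = m2 x * ip x * pderiv3 0 f x := by
  have h := heq x hx 2 0
  rw [hess_eq] at h
  simp [Chr, gMet, Matrix.diagonal_apply, Matrix.vecHead, Matrix.vecTail] at h
  linarith

lemma e02 : pderiv3 0 (fun y => pderiv3 2 f y) x = m2 x * ip x * pderiv3 0 f x := by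
  have h := heq x hx 0 2
  rw [hess_eq] at h
  simp [Chr, gMet, Matrix.diagonal_apply, Matrix.vecHead, Matrix.vecTail] at h
  linarith

lemma e00 : pderiv3 0 (fun y => pderiv3 0 f y) x
    = a x * ip x ^ 2 + (-(m1 x) * ip x ^ 3 * pderiv3 1 f x
        + -(m2 x) * ip x ^ 3 * pderiv3 2 f x) := by
  have h := heq x hx 0 0
  rw [hess_eq] at h
  simp [Chr, gMet, Matrix.diagonal_apply, Matrix.vecHead, Matrix.vecTail, psi_eq] at h
  linarith

end eqs

end TNW

namespace TNW

lemma zero_app (i : Fin 3) : (0 : Fin 3 → ℝ) i = 0 := rfl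

lemma m0_0 : m0 0 = 0 := by rw [m0, zero_app, zero_app]; simp
lemma m1_0 : m1 0 = 1 / 2 := by rw [m1, zero_app, zero_app]; simp
lemma m2_0 : m2 0 = 0 := by rw [m2, zero_app, zero_app]; simp
lemma nu_0 : nu 0 = 0 := by rw [nu, zero_app, zero_app]; simp
lemma ip_0 : ip 0 = 1 := by rw [ip, m0_0]; norm_num

lemma hd_nu (x : Fin 3 → ℝ) : HD nu (-(m2 x)) (-(m1 x)) x :=
  ((((hd_cos1 x).const_mul (-(1/2))).mul (hd_sin2 x)).congr_coef
    (by rw [m2]; ring) (by rw [m1]; ring)).congr_fun (fun y => by rw [nu])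

lemma hd_ip2 (x : Fin 3 → ℝ) :
    HD (fun y => ip y ^ 2) (2 * m1 x * ip x ^ 3) (2 * m2 x * ip x ^ 3) x :=
  (((hd_ip x).mul (hd_ip x)).congr_coef (by ring) (by ring)).congr_fun
    (fun y => by rw [pow_two])

lemma hd_ip3 (x : Fin 3 → ℝ) :
    HD (fun y => ip y ^ 3) (3 * m1 x * ip x ^ 4) (3 * m2 x * ip x ^ 4) x :=
  (((hd_ip x).mul (hd_ip2 x)).congr_coef (by ring) (by ring)).congr_fun
    (fun y => by ring)

lemma hd_ip4 (x : Fin 3 → ℝ) :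
    HD (fun y => ip y ^ 4) (4 * m1 x * ip x ^ 5) (4 * m2 x * ip x ^ 5) x :=
  (((hd_ip x).mul (hd_ip3 x)).congr_coef (by ring) (by ring)).congr_fun
    (fun y => by ring)

lemma hd_K1 (x : Fin 3 → ℝ) :
    HD (fun y => -(m1 y) * ip y ^ 3)
      (m0 x * ip x ^ 3 - 3 * m1 x ^ 2 * ip x ^ 4)
      (-(nu x) * ip x ^ 3 - 3 * m1 x * m2 x * ip x ^ 4) x :=
  ((hd_m1 x).neg.mul (hd_ip3 x)).congr_coef (by ring) (by ring)

lemma hd_K2 (x : Fin 3 → ℝ) :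
    HD (fun y => -(m2 y) * ip y ^ 3)
      (-(nu x) * ip x ^ 3 - 3 * m1 x * m2 x * ip x ^ 4)
      (m0 x * ip x ^ 3 - 3 * m2 x ^ 2 * ip x ^ 4) x :=
  ((hd_m2 x).neg.mul (hd_ip3 x)).congr_coef (by ring) (by ring)

lemma hd_G01 (x : Fin 3 → ℝ) :
    HD (fun y => m1 y * ip y)
      (-(m0 x) * ip x + m1 x ^ 2 * ip x ^ 2)
      (nu x * ip x + m1 x * m2 x * ip x ^ 2) x :=
  ((hd_m1 x).mul (hd_ip x)).congr_coef (by ring) (by ring)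

lemma hd_G02 (x : Fin 3 → ℝ) :
    HD (fun y => m2 y * ip y)
      (nu x * ip x + m1 x * m2 x * ip x ^ 2)
      (-(m0 x) * ip x + m2 x ^ 2 * ip x ^ 2) x :=
  ((hd_m2 x).mul (hd_ip x)).congr_coef (by ring) (by ring)

end TNW

namespace TNW

lemma main2 (U : Set (Fin 3 → ℝ)) (hUo : IsOpen U) (hU0 : (0 : Fin 3 → ℝ) ∈ U)
    (f a : (Fin 3 → ℝ) → ℝ) (hf : ContDiffOn ℝ (⊤ : ℕ∞) f U) (ha : ContDiffOn ℝ (⊤ : ℕ∞) a U)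
    (heq : ∀ x ∈ U, ∀ i j : Fin 3, hess (gMet 1 m0) f i j x = a x * gMet 1 m0 x i j) :
    ∀ i : Fin 3, pderiv3 i f 0 = 0 := by
  have hu : ∀ j : Fin 3, ContDiffOn ℝ (⊤ : ℕ∞) (fun y => pderiv3 j f y) U := by
    intro j
    have h1 : ContDiffOn ℝ (⊤ : ℕ∞) (fderiv ℝ f) U := hf.fderiv_of_isOpen hUo (by simp)
    exact h1.clm_apply contDiffOn_const
  have hud : ∀ (j : Fin 3), ∀ x ∈ U, DifferentiableAt ℝ (fun y => pderiv3 j f y) x :=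
    fun j x hx => ((hu j).differentiableOn (by simp)).differentiableAt (hUo.mem_nhds hx)
  have had : ∀ x ∈ U, DifferentiableAt ℝ a x :=
    fun x hx => (ha.differentiableOn (by simp)).differentiableAt (hUo.mem_nhds hx)
  -- ∂₂ a = 0 on U
  have ha2 : ∀ x ∈ U, pderiv3 2 a x = 0 := by
    intro x hx
    have h1 : a =ᶠ[nhds x] fun y => pderiv3 1 (fun z => pderiv3 1 f z) y := by
      filter_upwards [hUo.mem_nhds hx] with y hy
      exact (e11 heq hy).symm
    have h2 : (fun y => pderiv3 2 (fun z => pderiv3 1 f z) y) =ᶠ[nhds x] fun _ => (0:ℝ) := by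
      filter_upwards [hUo.mem_nhds hx] with y hy
      exact e21 heq hy
    rw [pderiv3_congr h1 2, schwarz hUo (hu 1) hx 2 1, pderiv3_congr h2 1, pderiv3_const]
  -- ∂₁ a (0) = 0
  have ha1 : pderiv3 1 a 0 = 0 := by
    have h1 : a =ᶠ[nhds (0 : Fin 3 → ℝ)] fun y => pderiv3 2 (fun z => pderiv3 2 f z) y := by
      filter_upwards [hUo.mem_nhds hU0] with y hy
      exact (e22 heq hy).symm
    have h2 : (fun y => pderiv3 1 (fun z => pderiv3 2 f z) y) =ᶠ[nhds (0 : Fin 3 → ℝ)]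
        fun _ => (0:ℝ) := by
      filter_upwards [hUo.mem_nhds hU0] with y hy
      exact e12 heq hy
    rw [pderiv3_congr h1 1, schwarz hUo (hu 2) hU0 1 2, pderiv3_congr h2 2, pderiv3_const]
  -- Identity I on U
  have hI : ∀ x ∈ U, (nu x * ip x + 2 * m1 x * m2 x * ip x ^ 2) * pderiv3 0 f x = 0 := by
    intro x hx
    have hs := schwarz hUo (hu 1) hx 2 0
    have h2 : (fun y => pderiv3 2 (fun z => pderiv3 1 f z) y) =ᶠ[nhds x] fun _ => (0:ℝ) := by
      filter_upwards [hUo.mem_nhds hx] with y hy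
      exact e21 heq hy
    rw [pderiv3_congr h2 0, pderiv3_const] at hs
    have h1 : (fun y => pderiv3 0 (fun z => pderiv3 1 f z) y) =ᶠ[nhds x]
        fun y => m1 y * ip y * pderiv3 0 f y := by
      filter_upwards [hUo.mem_nhds hx] with y hy
      exact e01 heq hy
    rw [pderiv3_congr h1 2,
      pderiv3_mul (F := fun y => m1 y * ip y) (G := fun y => pderiv3 0 f y)
        (hd_G01 x).diffAt (hud 0 x hx) 2,
      (hd_G01 x).pd2, e20 heq hx] at hs
    linear_combination hs
  -- u₀(0) = 0
  have hu0 : pderiv3 0 f 0 = 0 := by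
    have h1 : (fun y => (nu y * ip y + 2 * m1 y * m2 y * ip y ^ 2) * pderiv3 0 f y)
        =ᶠ[nhds (0 : Fin 3 → ℝ)] fun _ => (0:ℝ) := by
      filter_upwards [hUo.mem_nhds hU0] with y hy
      exact hI y hy
    have hH := ((hd_nu 0).mul (hd_ip 0)).add
      ((((hd_m1 0).const_mul 2).mul (hd_m2 0)).mul (hd_ip2 0))
    have h2 := pderiv3_congr h1 2
    rw [pderiv3_const,
      pderiv3_mul (F := fun y => nu y * ip y + 2 * m1 y * m2 y * ip y ^ 2)
        (G := fun y => pderiv3 0 f y) hH.diffAt (hud 0 0 hU0) 2,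
      hH.pd2] at h2
    simp only [m0_0, m1_0, m2_0, nu_0, ip_0] at h2
    norm_num at h2
    exact h2
  -- u₁(0) = 0
  have hu1 : pderiv3 1 f 0 = 0 := by
    have hs := schwarz hUo (hu 0) hU0 1 0
    have h1 : (fun y => pderiv3 0 (fun z => pderiv3 0 f z) y) =ᶠ[nhds (0 : Fin 3 → ℝ)]
        fun y => a y * ip y ^ 2 + (-(m1 y) * ip y ^ 3 * pderiv3 1 f y
          + -(m2 y) * ip y ^ 3 * pderiv3 2 f y) := by
      filter_upwards [hUo.mem_nhds hU0] with y hy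
      exact e00 heq hy
    have hT1d : DifferentiableAt ℝ (fun y => a y * ip y ^ 2) 0 :=
      (had 0 hU0).mul (hd_ip2 0).diffAt
    have hT2d : DifferentiableAt ℝ (fun y => -(m1 y) * ip y ^ 3 * pderiv3 1 f y) 0 :=
      ((hd_K1 0).diffAt.mul (hud 1 0 hU0) : DifferentiableAt ℝ
        (fun y => (-(m1 y) * ip y ^ 3) * pderiv3 1 f y) 0)
    have hT3d : DifferentiableAt ℝ (fun y => -(m2 y) * ip y ^ 3 * pderiv3 2 f y) 0 :=
      ((hd_K2 0).diffAt.mul (hud 2 0 hU0) : DifferentiableAt ℝ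
        (fun y => (-(m2 y) * ip y ^ 3) * pderiv3 2 f y) 0)
    rw [pderiv3_congr h1 1,
      pderiv3_add (F := fun y => a y * ip y ^ 2)
        (G := fun y => -(m1 y) * ip y ^ 3 * pderiv3 1 f y
          + -(m2 y) * ip y ^ 3 * pderiv3 2 f y) hT1d (hT2d.add hT3d) 1,
      pderiv3_add (F := fun y => -(m1 y) * ip y ^ 3 * pderiv3 1 f y)
        (G := fun y => -(m2 y) * ip y ^ 3 * pderiv3 2 f y) hT2d hT3d 1,
      pderiv3_mul (F := fun y => a y) (G := fun y => ip y ^ 2) (had 0 hU0) (hd_ip2 0).diffAt 1,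
      pderiv3_mul (F := fun y => -(m1 y) * ip y ^ 3) (G := fun y => pderiv3 1 f y)
        (hd_K1 0).diffAt (hud 1 0 hU0) 1,
      pderiv3_mul (F := fun y => -(m2 y) * ip y ^ 3) (G := fun y => pderiv3 2 f y)
        (hd_K2 0).diffAt (hud 2 0 hU0) 1,
      (hd_ip2 0).pd1, (hd_K1 0).pd1, (hd_K2 0).pd1, e11 heq hU0, e12 heq hU0] at hs
    have h3 : (fun y => pderiv3 1 (fun z => pderiv3 0 f z) y) =ᶠ[nhds (0 : Fin 3 → ℝ)]
        fun y => m1 y * ip y * pderiv3 0 f y := by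
      filter_upwards [hUo.mem_nhds hU0] with y hy
      exact e10 heq hy
    rw [pderiv3_congr h3 0,
      pderiv3_mul (F := fun y => m1 y * ip y) (G := fun y => pderiv3 0 f y)
        (hd_G01 0).diffAt (hud 0 0 hU0) 0,
      (hd_G01 0).pd0, e00 heq hU0] at hs
    rw [ha1] at hs
    simp only [m0_0, m1_0, m2_0, nu_0, ip_0] at hs
    norm_num at hs
    linarith
  -- Identity III on U
  have hIII : ∀ x ∈ U, (-(nu x) * ip x ^ 3 - 2 * m1 x * m2 x * ip x ^ 4) * pderiv3 1 f x
      + (m0 x * ip x ^ 3 - 2 * m2 x ^ 2 * ip x ^ 4) * pderiv3 2 f x = 0 := by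
    intro x hx
    have hs := schwarz hUo (hu 0) hx 2 0
    have h1 : (fun y => pderiv3 0 (fun z => pderiv3 0 f z) y) =ᶠ[nhds x]
        fun y => a y * ip y ^ 2 + (-(m1 y) * ip y ^ 3 * pderiv3 1 f y
          + -(m2 y) * ip y ^ 3 * pderiv3 2 f y) := by
      filter_upwards [hUo.mem_nhds hx] with y hy
      exact e00 heq hy
    have hT1d : DifferentiableAt ℝ (fun y => a y * ip y ^ 2) x :=
      (had x hx).mul (hd_ip2 x).diffAt
    have hT2d : DifferentiableAt ℝ (fun y => -(m1 y) * ip y ^ 3 * pderiv3 1 f y) x :=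
      ((hd_K1 x).diffAt.mul (hud 1 x hx) : DifferentiableAt ℝ
        (fun y => (-(m1 y) * ip y ^ 3) * pderiv3 1 f y) x)
    have hT3d : DifferentiableAt ℝ (fun y => -(m2 y) * ip y ^ 3 * pderiv3 2 f y) x :=
      ((hd_K2 x).diffAt.mul (hud 2 x hx) : DifferentiableAt ℝ
        (fun y => (-(m2 y) * ip y ^ 3) * pderiv3 2 f y) x)
    rw [pderiv3_congr h1 2,
      pderiv3_add (F := fun y => a y * ip y ^ 2)
        (G := fun y => -(m1 y) * ip y ^ 3 * pderiv3 1 f y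
          + -(m2 y) * ip y ^ 3 * pderiv3 2 f y) hT1d (hT2d.add hT3d) 2,
      pderiv3_add (F := fun y => -(m1 y) * ip y ^ 3 * pderiv3 1 f y)
        (G := fun y => -(m2 y) * ip y ^ 3 * pderiv3 2 f y) hT2d hT3d 2,
      pderiv3_mul (F := fun y => a y) (G := fun y => ip y ^ 2) (had x hx) (hd_ip2 x).diffAt 2,
      pderiv3_mul (F := fun y => -(m1 y) * ip y ^ 3) (G := fun y => pderiv3 1 f y)
        (hd_K1 x).diffAt (hud 1 x hx) 2,
      pderiv3_mul (F := fun y => -(m2 y) * ip y ^ 3) (G := fun y => pderiv3 2 f y)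
        (hd_K2 x).diffAt (hud 2 x hx) 2,
      (hd_ip2 x).pd2, (hd_K1 x).pd2, (hd_K2 x).pd2, e21 heq hx, e22 heq hx,
      ha2 x hx] at hs
    have h3 : (fun y => pderiv3 2 (fun z => pderiv3 0 f z) y) =ᶠ[nhds x]
        fun y => m2 y * ip y * pderiv3 0 f y := by
      filter_upwards [hUo.mem_nhds hx] with y hy
      exact e20 heq hy
    rw [pderiv3_congr h3 0,
      pderiv3_mul (F := fun y => m2 y * ip y) (G := fun y => pderiv3 0 f y)
        (hd_G02 x).diffAt (hud 0 x hx) 0,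
      (hd_G02 x).pd0, e00 heq hx] at hs
    linear_combination hs
  -- u₂(0) = 0
  have hu2 : pderiv3 2 f 0 = 0 := by
    have h1 : (fun y => (-(nu y) * ip y ^ 3 - 2 * m1 y * m2 y * ip y ^ 4) * pderiv3 1 f y
        + (m0 y * ip y ^ 3 - 2 * m2 y ^ 2 * ip y ^ 4) * pderiv3 2 f y)
        =ᶠ[nhds (0 : Fin 3 → ℝ)] fun _ => (0:ℝ) := by
      filter_upwards [hUo.mem_nhds hU0] with y hy
      exact hIII y hy
    have hdPf := (((hd_nu 0).neg).mul (hd_ip3 0)).sub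
      ((((hd_m1 0).const_mul 2).mul (hd_m2 0)).mul (hd_ip4 0))
    have hdQf := ((hd_m0 0).mul (hd_ip3 0)).sub
      (((((hd_m2 0).mul (hd_m2 0)).congr_fun (G := fun y => m2 y ^ 2) (fun y => pow_two (m2 y))).const_mul 2).mul
        (hd_ip4 0))
    have h2 := pderiv3_congr h1 1
    rw [pderiv3_const,
      pderiv3_add (F := fun y => (-(nu y) * ip y ^ 3 - 2 * m1 y * m2 y * ip y ^ 4)
          * pderiv3 1 f y)
        (G := fun y => (m0 y * ip y ^ 3 - 2 * m2 y ^ 2 * ip y ^ 4) * pderiv3 2 f y)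
        (hdPf.diffAt.mul (hud 1 0 hU0)) (hdQf.diffAt.mul (hud 2 0 hU0)) 1,
      pderiv3_mul (F := fun y => -(nu y) * ip y ^ 3 - 2 * m1 y * m2 y * ip y ^ 4)
        (G := fun y => pderiv3 1 f y) hdPf.diffAt (hud 1 0 hU0) 1,
      pderiv3_mul (F := fun y => m0 y * ip y ^ 3 - 2 * m2 y ^ 2 * ip y ^ 4)
        (G := fun y => pderiv3 2 f y) hdQf.diffAt (hud 2 0 hU0) 1,
      hdPf.pd1, hdQf.pd1, hu1] at h2
    simp only [m0_0, m1_0, m2_0, nu_0, ip_0] at h2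
    norm_num at h2
    exact h2
  intro i
  fin_cases i
  · exact hu0
  · exact hu1
  · exact hu2

end TNW

namespace TNW

lemma m0_periodic (p : Fin 3 → ℝ) (k : Fin 3 → ℤ) :
    m0 (fun i => p i + 2 * Real.pi * (k i)) = m0 p := by
  simp only [m0]
  rw [show p 1 + 2 * Real.pi * (k 1) = p 1 + (k 1 : ℝ) * (2 * Real.pi) by ring,
    Real.sin_add_int_mul_two_pi,
    show p 2 + 2 * Real.pi * (k 2) = p 2 + (k 2 : ℝ) * (2 * Real.pi) by ring,
    Real.cos_add_int_mul_two_pi]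

lemma periodic (p : Fin 3 → ℝ) (k : Fin 3 → ℤ) :
    gMet 1 m0 (fun i => p i + 2 * Real.pi * (k i)) = gMet 1 m0 p ∧
    aMat 1 m0 (fun i => p i + 2 * Real.pi * (k i)) = aMat 1 m0 p := by
  constructor
  · rw [gMet, gMet, m0_periodic]
  · rw [aMat, aMat, m0_periodic]

end TNW

/-- With `μ(x,y) = (1/2) sin x cos y` and `g = (1−μ)^{-2} dt² + dx² + dy²`:
`g` and the Codazzi tensor `A` are `2π`-periodic in all three coordinates
(hence descend to the torus `T³`), and `g` is not a warped product with
one-dimensional base near the origin: any `f` with `Hess f = a·g` near `0`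
has `∇f(0) = 0`. -/
theorem torus_not_warped :
    (∀ (p : Fin 3 → ℝ) (k : Fin 3 → ℤ),
      gMet 1 (fun y => (1 / 2) * Real.sin (y 1) * Real.cos (y 2))
          (fun i => p i + 2 * Real.pi * (k i))
        = gMet 1 (fun y => (1 / 2) * Real.sin (y 1) * Real.cos (y 2)) p ∧
      aMat 1 (fun y => (1 / 2) * Real.sin (y 1) * Real.cos (y 2))
          (fun i => p i + 2 * Real.pi * (k i))
        = aMat 1 (fun y => (1 / 2) * Real.sin (y 1) * Real.cos (y 2)) p) ∧
    (∀ U : Set (Fin 3 → ℝ), IsOpen U → (0 : Fin 3 → ℝ) ∈ U →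
      ∀ f a : (Fin 3 → ℝ) → ℝ, ContDiffOn ℝ (⊤ : ℕ∞) f U → ContDiffOn ℝ (⊤ : ℕ∞) a U →
      (∀ x ∈ U, ∀ i j : Fin 3,
        hess (gMet 1 (fun y => (1 / 2) * Real.sin (y 1) * Real.cos (y 2))) f i j x
          = a x * gMet 1 (fun y => (1 / 2) * Real.sin (y 1) * Real.cos (y 2)) x i j) →
      ∀ i : Fin 3, pderiv3 i f 0 = 0) := by
  constructor
  · intro p k
    exact TNW.periodic p k
  · intro U hUo hU0 f a hf ha heq
    exact TNW.main2 U hUo hU0 f a hf ha heq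
end
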